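/- For all real numbers x with 0 < x < 1 and all real y ≥ 0, the series ∑_{n=0}^{∞} xⁿ · γ(n+1/2, y)/Γ(n+1/2) converges absolutely and equals (erf(√y) − √x · e^{−y} · e^{xy} · erf(√(xy))) / (1 − x). -/

import Mathlib

/-! Write `P(s, y) = γ(s, y) / Γ(s)`. Integration by parts gives the recurrence
`P(s + 1, y) = P(s, y) - yˢ e⁻ʸ / Γ(s + 1)`, and the substitution `t = u²` gives
`P(1/2, y) = erf √y`. Telescoping the recurrence (with `P(s + n, y) → 0`) yields
`P(s, y) = ∑ₙ y^(n+s) e⁻ʸ / Γ(n + s + 1)`, hence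
`∑ₙ z^(n+1/2) / Γ(n + 3/2) = e^z erf √z`. As `0 ≤ P ≤ 1`, the series
`S = ∑ₙ xⁿ P(n + 1/2, y)` converges absolutely, and by the recurrence
`(1 - x) S = P(1/2, y) - √x e⁻ʸ ∑ₙ (xy)^(n+1/2) / Γ(n + 3/2)`. -/

/-- The lower incomplete gamma function `γ(x, y) = ∫_0^y t^(x-1) e^(-t) dt`. -/
noncomputable def lowerGamma (x y : ℝ) : ℝ :=
  ∫ t in (0 : ℝ)..y, t ^ (x - 1) * Real.exp (-t)

/-- The error function `erf(x) = (2/√π) ∫_0^x e^(-t²) dt`. -/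
noncomputable def erf (x : ℝ) : ℝ :=
  (2 / Real.sqrt Real.pi) * ∫ t in (0 : ℝ)..x, Real.exp (-t ^ 2)

open MeasureTheory Real Set Filter Topology

lemma lowerGamma_nonneg (s : ℝ) {y : ℝ} (hy : 0 ≤ y) : 0 ≤ lowerGamma s y :=
  intervalIntegral.integral_nonneg hy fun _ ht =>
    mul_nonneg (rpow_nonneg ht.1 _) (exp_pos _).le

lemma lowerGamma_le_Gamma {s y : ℝ} (hs : 0 < s) (hy : 0 ≤ y) :
    lowerGamma s y ≤ Gamma s := by
  rw [Gamma_eq_integral hs, lowerGamma, intervalIntegral.integral_of_le hy]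
  simp_rw [mul_comm (_ ^ (s - 1))]
  refine setIntegral_mono_set (GammaIntegral_convergent hs) ?_ Ioc_subset_Ioi_self.eventuallyLE
  exact ae_restrict_of_forall_mem measurableSet_Ioi fun t (ht : 0 < t) => by positivity

lemma lowerGamma_le_rpow_div {s y : ℝ} (hs : 0 < s) (hy : 0 ≤ y) :
    lowerGamma s y ≤ y ^ s / s := by
  calc lowerGamma s y ≤ ∫ t in (0 : ℝ)..y, t ^ (s - 1) :=
        intervalIntegral.integral_mono_on hy
          ((intervalIntegral.intervalIntegrable_rpow' (by linarith)).mul_continuousOn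
            (by fun_prop))
          (intervalIntegral.intervalIntegrable_rpow' (by linarith)) fun t ht =>
            mul_le_of_le_one_right (rpow_nonneg ht.1 _) (exp_le_one_iff.2 (by linarith [ht.1]))
    _ = y ^ s / s := by
        rw [integral_rpow (Or.inl (by linarith)), sub_add_cancel, zero_rpow hs.ne', sub_zero]

lemma ofReal_lowerGamma (s : ℝ) {y : ℝ} (hy : 0 ≤ y) :
    (lowerGamma s y : ℂ) = Complex.partialGamma s y := by
  rw [lowerGamma, Complex.partialGamma, ← intervalIntegral.integral_ofReal,
    intervalIntegral.integral_of_le hy, intervalIntegral.integral_of_le hy]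
  refine setIntegral_congr_fun measurableSet_Ioc fun t ht => ?_
  push_cast
  rw [Complex.ofReal_cpow ht.1.le]
  push_cast
  ring

lemma lowerGamma_add_one {s y : ℝ} (hs : 0 < s) (hy : 0 ≤ y) :
    lowerGamma (s + 1) y = s * lowerGamma s y - y ^ s * exp (-y) := by
  apply Complex.ofReal_injective
  rw [ofReal_lowerGamma _ hy]
  push_cast
  rw [Complex.partialGamma_add_one (by simpa using hs) hy, ofReal_lowerGamma _ hy,
    Complex.ofReal_cpow hy]
  push_cast
  ring

lemma lowerGamma_one_half {y : ℝ} (hy : 0 ≤ y) :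
    lowerGamma (1 / 2) y = sqrt π * erf (sqrt y) := by
  have hsubst := intervalIntegral.integral_comp_mul_deriv_of_deriv_nonneg
    (a := 0) (b := sqrt y) (f := fun u => u ^ 2) (f' := fun u => 2 * u)
    (g := fun t => t ^ (1 / 2 - 1 : ℝ) * exp (-t)) (by fun_prop)
    (fun u _ => by simpa using hasDerivAt_pow 2 u)
    fun u hu => mul_nonneg zero_le_two (by simpa [sqrt_nonneg] using hu.1.le)
  simp only [ne_eq, OfNat.ofNat_ne_zero, not_false_eq_true, zero_pow, sq_sqrt hy] at hsubst
  rw [lowerGamma, ← hsubst, erf, ← mul_assoc, mul_div_cancel₀ _ (sqrt_pos.2 pi_pos).ne',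
    ← intervalIntegral.integral_const_mul]
  refine intervalIntegral.integral_congr_ae (ae_of_all _ fun u hu => ?_)
  rw [uIoc_of_le (sqrt_nonneg y)] at hu
  have hu0 : 0 < u := hu.1
  rw [Function.comp_apply, rpow_sub (by positivity), rpow_one, ← sqrt_eq_rpow, sqrt_sq hu0.le]
  field_simp

noncomputable def regLowerGamma (s y : ℝ) : ℝ := lowerGamma s y / Gamma s

lemma regLowerGamma_nonneg {s y : ℝ} (hs : 0 < s) (hy : 0 ≤ y) : 0 ≤ regLowerGamma s y :=
  div_nonneg (lowerGamma_nonneg s hy) (Gamma_pos_of_pos hs).le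

lemma regLowerGamma_le_one {s y : ℝ} (hs : 0 < s) (hy : 0 ≤ y) : regLowerGamma s y ≤ 1 :=
  div_le_one_of_le₀ (lowerGamma_le_Gamma hs hy) (Gamma_pos_of_pos hs).le

lemma regLowerGamma_le {s y : ℝ} (hs : 0 < s) (hy : 0 ≤ y) :
    regLowerGamma s y ≤ y ^ s / Gamma (s + 1) := by
  rw [regLowerGamma, Gamma_add_one hs.ne', div_le_iff₀ (Gamma_pos_of_pos hs), div_mul_eq_mul_div,
    mul_div_mul_right _ _ (Gamma_pos_of_pos hs).ne']
  exact lowerGamma_le_rpow_div hs hy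

lemma regLowerGamma_add_one {s y : ℝ} (hs : 0 < s) (hy : 0 ≤ y) :
    regLowerGamma (s + 1) y = regLowerGamma s y - y ^ s * exp (-y) / Gamma (s + 1) := by
  have hG := (Gamma_pos_of_pos hs).ne'
  rw [regLowerGamma, regLowerGamma, lowerGamma_add_one hs hy, Gamma_add_one hs.ne']
  field_simp

lemma regLowerGamma_one_half {y : ℝ} (hy : 0 ≤ y) : regLowerGamma (1 / 2) y = erf (sqrt y) := by
  rw [regLowerGamma, lowerGamma_one_half hy, Gamma_one_half_eq,
    mul_div_cancel_left₀ _ (sqrt_pos.2 pi_pos).ne']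

lemma hasSum_regLowerGamma {s y : ℝ} (hs : 0 < s) (hy : 0 ≤ y) :
    HasSum (fun n : ℕ => y ^ (n + s) * exp (-y) / Gamma (n + s + 1)) (regLowerGamma s y) := by
  set P : ℕ → ℝ := fun n => regLowerGamma (n + s) y
  set a : ℕ → ℝ := fun n => y ^ (n + s) * exp (-y) / Gamma (n + s + 1)
  have hs' (n : ℕ) : 0 < n + s := by positivity
  have ha (n : ℕ) : 0 ≤ a n := by have := Gamma_pos_of_pos (hs' (n + 1)); positivity
  have hrec (n : ℕ) : a n = P n - P (n + 1) := by
    simp only [a, P, Nat.cast_succ, add_right_comm _ (1 : ℝ), regLowerGamma_add_one (hs' n) hy]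
    ring
  have hpartial (N : ℕ) : ∑ n ∈ Finset.range N, a n = P 0 - P N := by
    simp only [hrec, Finset.sum_range_sub']
  have hsummable : Summable a := summable_of_sum_range_le (c := P 0) ha fun N => by
    rw [hpartial]; linarith [regLowerGamma_nonneg (hs' N) hy]
  have hlim : Tendsto P atTop (𝓝 0) := by
    refine squeeze_zero (fun n => regLowerGamma_nonneg (hs' n) hy) (fun n => ?_)
      (by simpa using hsummable.tendsto_atTop_zero.const_mul (exp y))
    calc P n ≤ y ^ (n + s) / Gamma (n + s + 1) := regLowerGamma_le (hs' n) hy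
      _ = exp y * a n := by simp only [a]; rw [exp_neg]; field_simp
  rw [hasSum_iff_tendsto_nat_of_nonneg ha, funext hpartial]
  simpa [P] using tendsto_const_nhds.sub hlim

lemma one_sub_mul_tsum_pow_mul_of_succ_eq_sub {R : Type*} [Ring R] [TopologicalSpace R]
    [IsTopologicalRing R] [T2Space R] {x : R} {P a : ℕ → R}
    (hP : Summable fun n => x ^ n * P n) (hrec : ∀ n, P (n + 1) = P n - a n) :
    (1 - x) * ∑' n, x ^ n * P n = P 0 - ∑' n, x ^ (n + 1) * a n := by
  have hshift : Summable fun n => x ^ (n + 1) * P (n + 1) := (summable_nat_add_iff 1).2 hP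
  have hmul : Summable fun n => x ^ (n + 1) * P n :=
    (hP.mul_left x).congr fun n => by rw [pow_succ', mul_assoc]
  calc (1 - x) * ∑' n, x ^ n * P n
      = (P 0 + ∑' n, x ^ (n + 1) * P (n + 1)) - ∑' n, x ^ (n + 1) * P n := by
        rw [sub_mul, one_mul, ← hP.tsum_mul_left, hP.tsum_eq_zero_add]
        simp only [pow_zero, one_mul, pow_succ', mul_assoc]
    _ = P 0 - ∑' n, x ^ (n + 1) * a n := by
        rw [add_sub_assoc, ← hshift.tsum_sub hmul, sub_eq_add_neg, ← tsum_neg]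
        simp only [hrec, mul_sub, sub_sub_cancel_left]

lemma tsum_pow_succ_mul_rpow_mul_exp_div_Gamma {x y : ℝ} (hx : 0 ≤ x) (hy : 0 ≤ y) :
    ∑' n : ℕ, x ^ (n + 1) *
        (y ^ ((n : ℝ) + 1 / 2) * exp (-y) / Gamma ((n : ℝ) + 1 / 2 + 1)) =
      sqrt x * exp (-y) * exp (x * y) * erf (sqrt (x * y)) := by
  rw [← regLowerGamma_one_half (mul_nonneg hx hy),
    ← ((hasSum_regLowerGamma one_half_pos (mul_nonneg hx hy)).mul_left _).tsum_eq]
  refine tsum_congr fun n => ?_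
  have hxn : x ^ ((n : ℝ) + 1 / 2) = x ^ n * sqrt x := by
    rw [rpow_add' hx (by positivity), rpow_natCast, sqrt_eq_rpow]
  rw [mul_rpow hx hy, hxn, exp_neg (x * y)]
  field_simp
  rw [pow_succ, sq_sqrt hx]
  ring

theorem tsum_lowerGamma (x y : ℝ) (hx0 : 0 < x) (hx1 : x < 1) (hy : 0 ≤ y) :
    Summable (fun n : ℕ =>
        |x ^ n * lowerGamma ((n : ℝ) + 1 / 2) y / Real.Gamma ((n : ℝ) + 1 / 2)|) ∧
    ∑' n : ℕ, x ^ n * lowerGamma ((n : ℝ) + 1 / 2) y / Real.Gamma ((n : ℝ) + 1 / 2) =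
      (erf (Real.sqrt y) -
        Real.sqrt x * Real.exp (-y) * Real.exp (x * y) * erf (Real.sqrt (x * y))) / (1 - x) := by
  have hs (n : ℕ) : (0 : ℝ) < n + 1 / 2 := by positivity
  simp only [mul_div_assoc, ← regLowerGamma.eq_1]
  have habs : Summable fun n : ℕ => |x ^ n * regLowerGamma (n + 1 / 2) y| := by
    refine (summable_geometric_of_lt_one hx0.le hx1).of_nonneg_of_le (fun _ => abs_nonneg _)
      fun n => ?_
    rw [abs_of_nonneg (mul_nonneg (pow_nonneg hx0.le n) (regLowerGamma_nonneg (hs n) hy))]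
    exact mul_le_of_le_one_right (pow_nonneg hx0.le n) (regLowerGamma_le_one (hs n) hy)
  refine ⟨habs, ?_⟩
  have hrec (n : ℕ) : regLowerGamma ((n + 1 : ℕ) + 1 / 2) y = regLowerGamma (n + 1 / 2) y -
      y ^ ((n : ℝ) + 1 / 2) * exp (-y) / Gamma ((n : ℝ) + 1 / 2 + 1) := by
    rw [Nat.cast_succ, add_right_comm, regLowerGamma_add_one (hs n) hy]
  rw [eq_div_iff (sub_pos.2 hx1).ne', mul_comm,
    one_sub_mul_tsum_pow_mul_of_succ_eq_sub habs.of_abs hrec,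
    tsum_pow_succ_mul_rpow_mul_exp_div_Gamma hx0.le hy]
  norm_num [regLowerGamma_one_half hy]
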